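/- arXiv:0904.0342 — 2 statements merged into one kernel-verified Lean document; each statement's English description precedes it below -/
import Mathlib

section
/- Abstract Rosser incompleteness: Let S be a consistent formal system with a provability relation ⊢, and suppose there are formulas g(a,b) and h(a,b) numeralwise expressing the predicates G(a,b) ('b codes a proof in S of the diagonalization A_a(ā)') and H(a,b) ('b codes a proof in S of ¬A_a(ā)'), and let q be the Gödel number of the formula ∀b (g(a,b) → ∃c (c ≤ b ∧ h(a,c))). Then neither A_q(q̄) nor ¬A_q(q̄) is provable in S. -/
/-! Rosser's trick: a proof `e` of the Rosser sentence `R` makes `G e` provable, and consistency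
refutes `H d` for every `d ≤ e`, so the Rosser clause proves `¬R`. Symmetrically, a proof `k` of
`¬R` makes `H k` provable while consistency refutes `G d` for all `d < k`, which proves `R`.
Only finitely many numerals are involved in each case, so no ω-consistency is needed. -/

section Rosser

variable {Formula : Type} {Prov : Formula → Prop} {neg : Formula → Formula}
  {ProofOf : ℕ → Formula → Prop}

def Consistent (Prov : Formula → Prop) (neg : Formula → Formula) : Prop :=
  ¬ ∃ B, Prov B ∧ Prov (neg B)

theorem Consistent.not_proofOf_neg (hcon : Consistent Prov neg)
    (prov_of_proofOf : ∀ b F, ProofOf b F → Prov F) {F : Formula} (hF : Prov F) (b : ℕ) :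
    ¬ ProofOf b (neg F) :=
  fun hb => hcon ⟨F, hF, prov_of_proofOf b _ hb⟩

theorem Consistent.not_proofOf_of_prov_neg (hcon : Consistent Prov neg)
    (prov_of_proofOf : ∀ b F, ProofOf b F → Prov F) {F : Formula} (hF : Prov (neg F)) (b : ℕ) :
    ¬ ProofOf b F :=
  fun hb => hcon ⟨F, prov_of_proofOf b _ hb, hF⟩

variable {R : Formula} {G H : ℕ → Formula}

theorem Consistent.not_prov_rosser (hcon : Consistent Prov neg)
    (hProv : ∀ F, Prov F ↔ ∃ b, ProofOf b F)
    (hG_true : ∀ b, ProofOf b R → Prov (G b))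
    (hH_false : ∀ b, ¬ ProofOf b (neg R) → Prov (neg (H b)))
    (rosser_le : ∀ e, Prov (G e) → (∀ d, d ≤ e → Prov (neg (H d))) → Prov (neg R)) :
    ¬ Prov R := by
  intro hR
  obtain ⟨e, he⟩ := (hProv R).mp hR
  have prov_of_proofOf b F (hb : ProofOf b F) : Prov F := (hProv F).mpr ⟨b, hb⟩
  have hnegR : Prov (neg R) := rosser_le e (hG_true e he) fun d _ =>
    hH_false d (hcon.not_proofOf_neg prov_of_proofOf hR d)
  exact hcon ⟨R, hR, hnegR⟩

theorem Consistent.not_prov_neg_rosser (hcon : Consistent Prov neg)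
    (hProv : ∀ F, Prov F ↔ ∃ b, ProofOf b F)
    (hH_true : ∀ b, ProofOf b (neg R) → Prov (H b))
    (hG_false : ∀ b, ¬ ProofOf b R → Prov (neg (G b)))
    (rosser_lt : ∀ k, Prov (H k) → (∀ d, d < k → Prov (neg (G d))) → Prov R) :
    ¬ Prov (neg R) := by
  intro hnegR
  obtain ⟨k, hk⟩ := (hProv (neg R)).mp hnegR
  have prov_of_proofOf b F (hb : ProofOf b F) : Prov F := (hProv F).mpr ⟨b, hb⟩
  have hR : Prov R := rosser_lt k (hH_true k hk) fun d _ =>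
    hG_false d (hcon.not_proofOf_of_prov_neg prov_of_proofOf hnegR d)
  exact hcon ⟨R, hR, hnegR⟩

end Rosser

/-- Abstract Rosser incompleteness theorem.

`Formula` is the type of formulas of the system `S`, `Prov` its provability
predicate, `neg` negation.  `ProofOf b F` means "the natural number `b` codes a
proof in `S` of `F`", and provability means having a coded proof.  `D a` is the
diagonalization `A_a(ā)` of the formula with Gödel number `a`.  The formulas
`gF a b` (resp. `hF a b`) are `g(ā, b̄)` (resp. `h(ā, b̄)`), numeralwise
expressing the predicates `G(a,b)` : "`b` codes a proof of `A_a(ā)`" and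
`H(a,b)` : "`b` codes a proof of `¬A_a(ā)`".  `q` is the Gödel number of the
Rosser formula `∀b (g(a,b) → ∃c (c ≤ b ∧ h(a,c)))`, so that `D q` is the Rosser
sentence; the two closure hypotheses express the finitely many first-order
deductions used in Rosser's argument.  If `S` is consistent, then neither
`A_q(q̄)` nor `¬A_q(q̄)` is provable. -/
theorem rosser_incompleteness
    (Formula : Type) (Prov : Formula → Prop) (neg : Formula → Formula)
    (ProofOf : ℕ → Formula → Prop)
    (hProv : ∀ F, Prov F ↔ ∃ b, ProofOf b F)
    (D : ℕ → Formula)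
    (gF hF : ℕ → ℕ → Formula)
    (hg_true : ∀ a b, ProofOf b (D a) → Prov (gF a b))
    (hg_false : ∀ a b, ¬ ProofOf b (D a) → Prov (neg (gF a b)))
    (hh_true : ∀ a b, ProofOf b (neg (D a)) → Prov (hF a b))
    (hh_false : ∀ a b, ¬ ProofOf b (neg (D a)) → Prov (neg (hF a b)))
    (q : ℕ)
    (closure1 : ∀ e, Prov (gF q e) →
      (∀ d, d ≤ e → Prov (neg (hF q d))) → Prov (neg (D q)))
    (closure2 : ∀ k, Prov (hF q k) →
      (∀ d, d < k → Prov (neg (gF q d))) → Prov (D q))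
    (consistent : ¬ ∃ B, Prov B ∧ Prov (neg B)) :
    ¬ Prov (D q) ∧ ¬ Prov (neg (D q)) :=
  have hcon : Consistent Prov neg := consistent
  ⟨hcon.not_prov_rosser hProv (hg_true q) (hh_false q) closure1,
    hcon.not_prov_neg_rosser hProv (hh_true q) (hg_false q) closure2⟩
end

section
/- Abstract first Gödel incompleteness theorem: Let S be a formal system with a formula g(a,b) numeralwise expressing the predicate 'b codes a proof in S of A_a(ā)', and let p be the Gödel number of ∀b ¬g(a,b). If S is consistent, then A_p(p̄) is not provable in S; if moreover S is ω-consistent, then ¬A_p(p̄) is not provable in S. -/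
/-!
A proof `b` of the Gödel sentence `A_p(p̄)` would make `g(p̄, b̄)` provable, hence by existential
introduction also `¬A_p(p̄)`, contradicting consistency. So no `n` codes a proof of `A_p(p̄)`, and
numeralwise expressibility makes every `¬g(p̄, n̄)` provable; ω-consistency then forbids a proof
of `¬A_p(p̄)`.
-/

section AbstractIncompleteness

variable {Formula : Type} {Prov : Formula → Prop} {neg : Formula → Formula}
  {ProofOf : ℕ → Formula → Prop}

theorem not_prov_of_forall_proofOf_prov_neg
    (hProofOf : ∀ F, Prov F → ∃ b, ProofOf b F)
    (consistent : ¬ ∃ B, Prov B ∧ Prov (neg B))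
    {A : Formula} (hA : ∀ b, ProofOf b A → Prov (neg A)) :
    ¬ Prov A := fun hProv =>
  let ⟨b, hb⟩ := hProofOf A hProv
  consistent ⟨A, hProv, hA b hb⟩

theorem forall_prov_neg_of_not_prov
    (hProv : ∀ b F, ProofOf b F → Prov F)
    {A : Formula} {G : ℕ → Formula} (hG : ∀ b, ¬ ProofOf b A → Prov (neg (G b)))
    (hA : ¬ Prov A) (n : ℕ) :
    Prov (neg (G n)) :=
  hG n fun hn => hA (hProv n A hn)

end AbstractIncompleteness

/-- Abstract first Gödel incompleteness theorem.

`ProofOf b F` means "`b` codes a proof in `S` of `F`", and provability means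
having a coded proof.  `D p` is the Gödel sentence `A_p(p̄) = ∀b ¬g(p̄,b)`,
where `p` is the Gödel number of `∀b ¬g(a,b)` and `gF p b` is the formula
`g(p̄, b̄)` numeralwise expressing "`b` codes a proof of `A_p(p̄)`".
`existIntro` is existential introduction from a numeral instance: from
`g(p̄, b̄)` the system derives `¬∀b ¬g(p̄,b)`, i.e. `¬A_p(p̄)`.
If `S` is consistent then `A_p(p̄)` is not provable; if moreover `S` is
ω-consistent (the inner antecedent: from `⊢ ¬g(p̄,n̄)` for every `n` it never
also proves `¬∀b ¬g(p̄,b)`), then `¬A_p(p̄)` is not provable. -/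
theorem godel_first_incompleteness
    (Formula : Type) (Prov : Formula → Prop) (neg : Formula → Formula)
    (ProofOf : ℕ → Formula → Prop)
    (hProv : ∀ F, Prov F ↔ ∃ b, ProofOf b F)
    (D : ℕ → Formula)
    (gF : ℕ → ℕ → Formula)
    (hg_true : ∀ a b, ProofOf b (D a) → Prov (gF a b))
    (hg_false : ∀ a b, ¬ ProofOf b (D a) → Prov (neg (gF a b)))
    (p : ℕ)
    (existIntro : ∀ b, Prov (gF p b) → Prov (neg (D p)))
    (consistent : ¬ ∃ B, Prov B ∧ Prov (neg B)) :
    ¬ Prov (D p) ∧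
      (((∀ n : ℕ, Prov (neg (gF p n))) → ¬ Prov (neg (D p))) →
        ¬ Prov (neg (D p))) := by
  have not_prov_D : ¬ Prov (D p) :=
    not_prov_of_forall_proofOf_prov_neg (fun F => (hProv F).1) consistent
      fun b hb => existIntro b (hg_true p b hb)
  have prov_neg_gF : ∀ n, Prov (neg (gF p n)) :=
    forall_prov_neg_of_not_prov (fun b F hb => (hProv F).2 ⟨b, hb⟩) (hg_false p) not_prov_D
  exact ⟨not_prov_D, fun ω_consistent => ω_consistent prov_neg_gF⟩
end
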